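/- Let q > 1 and let a be a dominant ordered q-increasing (d+1)-dimensional sequence of length n > 3. Then: (i) the relation ∼ (defined by t ∼ s iff t = s or t ∼_l s or t ∼_r s) is an equivalence relation on {1,...,d}; (ii) in each equivalence class, either every pair of distinct elements is related by ∼_r or every pair of distinct elements is related by ∼_l; (iii) the relation ≺ is transitive and induces a strict total order on the set of equivalence classes: for any two distinct equivalence classes C, C', either t ≺ s for all t ∈ C and s ∈ C', or s ≺ t for all such pairs. -/

import Mathlib

/-- A `(d+1)`-dimensional sequence is ordered `q`-increasing: every coordinate
sequence is positive and for every `t` the sequence of ratios of the `(t+1)`-st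
to the `t`-th coordinate sequence is `q`-increasing. -/
def OrdQInc (q : ℝ) {d n : ℕ} (a : Fin n → Fin (d + 1) → ℝ) : Prop :=
  (∀ i t, 0 < a i t) ∧
  ∀ t : Fin d, ∀ i : Fin n, ∀ h : (i : ℕ) + 1 < n,
    a ⟨(i : ℕ) + 1, h⟩ t.succ / a ⟨(i : ℕ) + 1, h⟩ t.castSucc >
      q * (a i t.succ / a i t.castSucc)

/-- `fseq a t i j` is the increase `f_a(t,i,j)` of the ratio of the `(t+1)`-st and
`t`-th coordinate sequences from position `i` to position `j`. -/
noncomputable def fseq {d n : ℕ} (a : Fin n → Fin (d + 1) → ℝ) (t : Fin d) (i j : Fin n) : ℝ :=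
  (a j t.succ * a i t.castSucc) / (a j t.castSucc * a i t.succ)

/-- `a` is left-dominant: for each pair of distinct `s,t`, the position of
`f_a(t,i,j)/f_a(s,j,k)` relative to the interval `[1/q, q]` is the same for all
triples `i < j < k`. -/
def LeftDominant (q : ℝ) {d n : ℕ} (a : Fin n → Fin (d + 1) → ℝ) : Prop :=
  ∀ s t : Fin d, s ≠ t →
    (∀ i j k : Fin n, i < j → j < k → fseq a t i j / fseq a s j k < 1 / q) ∨
    (∀ i j k : Fin n, i < j → j < k → fseq a t i j / fseq a s j k ∈ Set.Icc (1 / q) q) ∨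
    (∀ i j k : Fin n, i < j → j < k → q < fseq a t i j / fseq a s j k)

/-- `a` is right-dominant: for each pair of distinct `s,t`, the position of
`f_a(t,j,k)/f_a(s,i,j)` relative to the interval `[1/q, q]` is the same for all
triples `i < j < k`. -/
def RightDominant (q : ℝ) {d n : ℕ} (a : Fin n → Fin (d + 1) → ℝ) : Prop :=
  ∀ s t : Fin d, s ≠ t →
    (∀ i j k : Fin n, i < j → j < k → fseq a t j k / fseq a s i j < 1 / q) ∨
    (∀ i j k : Fin n, i < j → j < k → fseq a t j k / fseq a s i j ∈ Set.Icc (1 / q) q) ∨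
    (∀ i j k : Fin n, i < j → j < k → q < fseq a t j k / fseq a s i j)

/-- The relation `t ≺ s`: for all `i < j < k`, `q·f_a(t,j,k) < f_a(s,i,j)` and
`q·f_a(t,i,j) < f_a(s,j,k)`. -/
def Prec (q : ℝ) {d n : ℕ} (a : Fin n → Fin (d + 1) → ℝ) (t s : Fin d) : Prop :=
  t ≠ s ∧ ∀ i j k : Fin n, i < j → j < k →
    q * fseq a t j k < fseq a s i j ∧ q * fseq a t i j < fseq a s j k

/-- The relation `t ∼_l s` (left similar): for all `i < j < k`,
`f_a(t,i,j) > q·f_a(s,j,k)` and `f_a(s,i,j) > q·f_a(t,j,k)`. -/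
def SimL (q : ℝ) {d n : ℕ} (a : Fin n → Fin (d + 1) → ℝ) (t s : Fin d) : Prop :=
  t ≠ s ∧ ∀ i j k : Fin n, i < j → j < k →
    fseq a t i j > q * fseq a s j k ∧ fseq a s i j > q * fseq a t j k

/-- The relation `t ∼_r s` (right similar): for all `i < j < k`,
`f_a(t,j,k) > q·f_a(s,i,j)` and `f_a(s,j,k) > q·f_a(t,i,j)`. -/
def SimR (q : ℝ) {d n : ℕ} (a : Fin n → Fin (d + 1) → ℝ) (t s : Fin d) : Prop :=
  t ≠ s ∧ ∀ i j k : Fin n, i < j → j < k →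
    fseq a t j k > q * fseq a s i j ∧ fseq a s j k > q * fseq a t i j

/-- The relation `t ∼ s`: `t = s`, or `t ∼_l s`, or `t ∼_r s`. -/
def Sim (q : ℝ) {d n : ℕ} (a : Fin n → Fin (d + 1) → ℝ) (t s : Fin d) : Prop :=
  t = s ∨ SimL q a t s ∨ SimR q a t s

/-!
Write `L(t,s)` (`LeftBelow`) for `q·f(t,i,j) < f(s,j,k)` and `R(t,s)` (`RightBelow`) for
`q·f(t,j,k) < f(s,i,j)` at all `i < j < k`. Then `t ≺ s` is `L(t,s) ∧ R(t,s)`, `∼_l` is `R` in both directions and `∼_r` is `L`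
in both directions. Since `f(t,i,k) = f(t,i,j)·f(t,j,k)` with every factor `> q`, the middle
alternative of dominance is impossible, so for `t ≠ s` either `L(t,s)` or `R(s,t)`, and either
`R(t,s)` or `L(s,t)`. Following the increments along four indices `i < j < k < l` rules out
three-cycles of shape `L,L,R` and `R,R,L`; this makes `L` and `R` transitive on distinct
elements, and every remaining claim reduces to excluding one such cycle.
-/

theorem Fin.exists_lt_lt_of_two_lt {n : ℕ} (hn : 2 < n) : ∃ i j k : Fin n, i < j ∧ j < k :=
  ⟨⟨0, by omega⟩, ⟨1, by omega⟩, ⟨2, by omega⟩, by simp [Fin.lt_def]⟩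

theorem Fin.exists_lt_lt_lt_of_three_lt {n : ℕ} (hn : 3 < n) :
    ∃ i j k l : Fin n, i < j ∧ j < k ∧ k < l :=
  ⟨⟨0, by omega⟩, ⟨1, by omega⟩, ⟨2, by omega⟩, ⟨3, by omega⟩, by simp [Fin.lt_def]⟩

section

variable {q : ℝ} {d n : ℕ} {a : Fin n → Fin (d + 1) → ℝ}

theorem fseq_pos (hpos : ∀ i t, 0 < a i t) (t : Fin d) (i j : Fin n) : 0 < fseq a t i j :=
  div_pos (mul_pos (hpos _ _) (hpos _ _)) (mul_pos (hpos _ _) (hpos _ _))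

theorem fseq_mul_fseq (hpos : ∀ i t, 0 < a i t) (t : Fin d) (i j k : Fin n) :
    fseq a t i j * fseq a t j k = fseq a t i k := by
  have := (hpos j t.castSucc).ne'
  have := (hpos j t.succ).ne'
  unfold fseq
  field_simp

namespace OrdQInc

theorem lt_fseq (hq : 1 ≤ q) (ha : OrdQInc q a) (t : Fin d) {i j : Fin n} (hij : i < j) :
    q < fseq a t i j := by
  set r : Fin n → ℝ := fun m => a m t.succ / a m t.castSucc
  have hr : ∀ m, 0 < r m := fun m => div_pos (ha.1 _ _) (ha.1 _ _)
  have key : ∀ m, (i : ℕ) + 1 ≤ m → ∀ hm : m < n, q * r i < r ⟨m, hm⟩ := by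
    intro m him
    induction m, him using Nat.le_induction with
    | base => exact ha.2 t i
    | succ m him ih =>
      intro hm
      calc q * r i < r ⟨m, by omega⟩ := ih (by omega)
        _ ≤ q * r ⟨m, by omega⟩ := le_mul_of_one_le_left (hr _).le hq
        _ < r ⟨m + 1, hm⟩ := ha.2 t ⟨m, by omega⟩ hm
  have hfr : fseq a t i j = r j / r i := (div_div_div_eq _ _ _ _).symm
  rw [hfr, lt_div_iff₀ (hr i)]
  exact key j hij j.isLt

theorem mul_fseq_lt_fseq_of_lt_left (hq : 1 ≤ q) (ha : OrdQInc q a) (t : Fin d)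
    {i j : Fin n} (k : Fin n) (hij : i < j) : q * fseq a t j k < fseq a t i k := by
  rw [← fseq_mul_fseq ha.1 t i j k]
  exact mul_lt_mul_of_pos_right (ha.lt_fseq hq t hij) (fseq_pos ha.1 t j k)

theorem mul_fseq_lt_fseq_of_lt_right (hq : 1 ≤ q) (ha : OrdQInc q a) (t : Fin d)
    (i : Fin n) {j k : Fin n} (hjk : j < k) : q * fseq a t i j < fseq a t i k := by
  rw [← fseq_mul_fseq ha.1 t i j k, mul_comm q]
  exact mul_lt_mul_of_pos_left (ha.lt_fseq hq t hjk) (fseq_pos ha.1 t i j)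

theorem fseq_lt_fseq_of_lt_left (hq : 1 ≤ q) (ha : OrdQInc q a) (t : Fin d)
    {i j : Fin n} (k : Fin n) (hij : i < j) : fseq a t j k < fseq a t i k :=
  (le_mul_of_one_le_left (fseq_pos ha.1 t j k).le hq).trans_lt
    (ha.mul_fseq_lt_fseq_of_lt_left hq t k hij)

theorem fseq_lt_fseq_of_lt_right (hq : 1 ≤ q) (ha : OrdQInc q a) (t : Fin d)
    (i : Fin n) {j k : Fin n} (hjk : j < k) : fseq a t i j < fseq a t i k :=
  (le_mul_of_one_le_left (fseq_pos ha.1 t i j).le hq).trans_lt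
    (ha.mul_fseq_lt_fseq_of_lt_right hq t i hjk)

end OrdQInc

def LeftBelow (q : ℝ) (a : Fin n → Fin (d + 1) → ℝ) (t s : Fin d) : Prop :=
  ∀ i j k : Fin n, i < j → j < k → q * fseq a t i j < fseq a s j k

def RightBelow (q : ℝ) (a : Fin n → Fin (d + 1) → ℝ) (t s : Fin d) : Prop :=
  ∀ i j k : Fin n, i < j → j < k → q * fseq a t j k < fseq a s i j

variable {t s u : Fin d}

theorem prec_iff : Prec q a t s ↔ t ≠ s ∧ RightBelow q a t s ∧ LeftBelow q a t s := by
  simp only [Prec, RightBelow, LeftBelow, imp_and, forall_and]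

theorem simL_iff : SimL q a t s ↔ t ≠ s ∧ RightBelow q a s t ∧ RightBelow q a t s := by
  simp only [SimL, RightBelow, gt_iff_lt, imp_and, forall_and]

theorem simR_iff : SimR q a t s ↔ t ≠ s ∧ LeftBelow q a s t ∧ LeftBelow q a t s := by
  simp only [SimR, LeftBelow, gt_iff_lt, imp_and, forall_and]

theorem SimL.symm (h : SimL q a t s) : SimL q a s t :=
  ⟨h.1.symm, fun i j k hij hjk => (h.2 i j k hij hjk).symm⟩

theorem SimR.symm (h : SimR q a t s) : SimR q a s t :=
  ⟨h.1.symm, fun i j k hij hjk => (h.2 i j k hij hjk).symm⟩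

theorem LeftBelow.fseq_lt (hq : 1 ≤ q) (ha : OrdQInc q a) (h : LeftBelow q a t s)
    {i j k : Fin n} (hij : i < j) (hjk : j < k) : fseq a t i j < fseq a s j k :=
  (le_mul_of_one_le_left (fseq_pos ha.1 t i j).le hq).trans_lt (h i j k hij hjk)

theorem RightBelow.fseq_lt (hq : 1 ≤ q) (ha : OrdQInc q a) (h : RightBelow q a t s)
    {i j k : Fin n} (hij : i < j) (hjk : j < k) : fseq a t j k < fseq a s i j :=
  (le_mul_of_one_le_left (fseq_pos ha.1 t j k).le hq).trans_lt (h i j k hij hjk)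

theorem LeftBelow.not_rightBelow (hq : 1 ≤ q) (hn : 2 < n) (ha : OrdQInc q a)
    (h : LeftBelow q a t s) : ¬ RightBelow q a s t := by
  intro h'
  obtain ⟨i, j, k, hij, hjk⟩ := Fin.exists_lt_lt_of_two_lt hn
  exact (h.fseq_lt hq ha hij hjk).not_gt (h'.fseq_lt hq ha hij hjk)

/-- Along `i < j < k < l` the cycle gives
`f(t,i,j) < f(s,j,k) < f(u,k,l) < f(u,j,l) < f(t,i,j)`. -/
theorem not_rightBelow_of_leftBelow_of_leftBelow (hq : 1 ≤ q) (hn : 3 < n) (ha : OrdQInc q a)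
    (hts : LeftBelow q a t s) (hsu : LeftBelow q a s u) : ¬ RightBelow q a u t := by
  intro hut
  obtain ⟨i, j, k, l, hij, hjk, hkl⟩ := Fin.exists_lt_lt_lt_of_three_lt hn
  have := calc fseq a t i j < fseq a s j k := hts.fseq_lt hq ha hij hjk
    _ < fseq a u k l := hsu.fseq_lt hq ha hjk hkl
    _ < fseq a u j l := ha.fseq_lt_fseq_of_lt_left hq u l hjk
    _ < fseq a t i j := hut.fseq_lt hq ha hij (hjk.trans hkl)
  exact lt_irrefl _ this

theorem not_leftBelow_of_rightBelow_of_rightBelow (hq : 1 ≤ q) (hn : 3 < n) (ha : OrdQInc q a)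
    (hts : RightBelow q a t s) (hsu : RightBelow q a s u) : ¬ LeftBelow q a u t := by
  intro hut
  obtain ⟨i, j, k, l, hij, hjk, hkl⟩ := Fin.exists_lt_lt_lt_of_three_lt hn
  have := calc fseq a t k l < fseq a s j k := hts.fseq_lt hq ha hjk hkl
    _ < fseq a u i j := hsu.fseq_lt hq ha hij hjk
    _ < fseq a u i k := ha.fseq_lt_fseq_of_lt_right hq u i hjk
    _ < fseq a t k l := hut.fseq_lt hq ha (hij.trans hjk) hkl
  exact lt_irrefl _ this

/-- The middle alternative of dominance is impossible, since
`f(s,j,l) ≤ q f(t,i,j) < f(t,i,k) ≤ q f(s,k,l) < f(s,j,l)`. -/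
theorem LeftDominant.leftBelow_or_rightBelow (hq : 1 ≤ q) (hn : 3 < n) (ha : OrdQInc q a)
    (hld : LeftDominant q a) (hts : t ≠ s) : LeftBelow q a t s ∨ RightBelow q a s t := by
  have hq₀ : 0 < q := by linarith
  rcases hld s t hts.symm with h | h | h
  · refine Or.inl fun i j k hij hjk => ?_
    have := h i j k hij hjk
    rwa [div_lt_div_iff₀ (fseq_pos ha.1 s j k) hq₀, one_mul, mul_comm] at this
  · obtain ⟨i, j, k, l, hij, hjk, hkl⟩ := Fin.exists_lt_lt_lt_of_three_lt hn
    have h₁ := (h i j l hij (hjk.trans hkl)).1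
    have h₂ := (h i k l (hij.trans hjk) hkl).2
    rw [div_le_div_iff₀ hq₀ (fseq_pos ha.1 s j l)] at h₁
    rw [div_le_iff₀ (fseq_pos ha.1 s k l)] at h₂
    have := ha.mul_fseq_lt_fseq_of_lt_right hq t i hjk
    have := ha.mul_fseq_lt_fseq_of_lt_left hq s l hjk
    exact absurd h₁ (by linarith)
  · exact Or.inr fun i j k hij hjk => (lt_div_iff₀ (fseq_pos ha.1 s j k)).1 (h i j k hij hjk)

/-- The middle alternative of dominance is impossible, since
`f(s,i,k) ≤ q f(t,k,l) < f(t,j,l) ≤ q f(s,i,j) < f(s,i,k)`. -/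
theorem RightDominant.rightBelow_or_leftBelow (hq : 1 ≤ q) (hn : 3 < n) (ha : OrdQInc q a)
    (hrd : RightDominant q a) (hts : t ≠ s) : RightBelow q a t s ∨ LeftBelow q a s t := by
  have hq₀ : 0 < q := by linarith
  rcases hrd s t hts.symm with h | h | h
  · refine Or.inl fun i j k hij hjk => ?_
    have := h i j k hij hjk
    rwa [div_lt_div_iff₀ (fseq_pos ha.1 s i j) hq₀, one_mul, mul_comm] at this
  · obtain ⟨i, j, k, l, hij, hjk, hkl⟩ := Fin.exists_lt_lt_lt_of_three_lt hn
    have h₁ := (h i k l (hij.trans hjk) hkl).1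
    have h₂ := (h i j l hij (hjk.trans hkl)).2
    rw [div_le_div_iff₀ hq₀ (fseq_pos ha.1 s i k)] at h₁
    rw [div_le_iff₀ (fseq_pos ha.1 s i j)] at h₂
    have := ha.mul_fseq_lt_fseq_of_lt_left hq t l hjk
    have := ha.mul_fseq_lt_fseq_of_lt_right hq s i hjk
    exact absurd h₁ (by linarith)
  · exact Or.inr fun i j k hij hjk => (lt_div_iff₀ (fseq_pos ha.1 s i j)).1 (h i j k hij hjk)

theorem LeftBelow.trans (hq : 1 ≤ q) (hn : 3 < n) (ha : OrdQInc q a) (hld : LeftDominant q a)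
    (hts : LeftBelow q a t s) (hsu : LeftBelow q a s u) (htu : t ≠ u) : LeftBelow q a t u :=
  (hld.leftBelow_or_rightBelow hq hn ha htu).resolve_right
    (not_rightBelow_of_leftBelow_of_leftBelow hq hn ha hts hsu)

theorem RightBelow.trans (hq : 1 ≤ q) (hn : 3 < n) (ha : OrdQInc q a) (hrd : RightDominant q a)
    (hts : RightBelow q a t s) (hsu : RightBelow q a s u) (htu : t ≠ u) : RightBelow q a t u :=
  (hrd.rightBelow_or_leftBelow hq hn ha htu).resolve_right
    (not_leftBelow_of_rightBelow_of_rightBelow hq hn ha hts hsu)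

theorem SimL.not_simR (hq : 1 ≤ q) (hn : 3 < n) (ha : OrdQInc q a) (hld : LeftDominant q a)
    (hts : SimL q a t s) : ¬ SimR q a s u := by
  intro hsu
  obtain ⟨-, hRst, hRts⟩ := simL_iff.1 hts
  obtain ⟨-, hLus, hLsu⟩ := simR_iff.1 hsu
  by_cases htu : t = u
  · subst htu
    exact hLus.not_rightBelow hq (by omega) ha hRst
  rcases hld.leftBelow_or_rightBelow hq hn ha htu with hLtu | hRut
  · exact not_rightBelow_of_leftBelow_of_leftBelow hq hn ha hLtu hLus hRst
  · exact not_leftBelow_of_rightBelow_of_rightBelow hq hn ha hRut hRts hLsu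

theorem Sim.trans (hq : 1 ≤ q) (hn : 3 < n) (ha : OrdQInc q a)
    (hld : LeftDominant q a) (hrd : RightDominant q a)
    (hts : Sim q a t s) (hsu : Sim q a s u) : Sim q a t u := by
  by_cases htu : t = u
  · exact Or.inl htu
  rcases hts with rfl | hts | hts
  · exact hsu
  all_goals rcases hsu with rfl | hsu | hsu
  · exact Or.inr (Or.inl hts)
  · obtain ⟨-, hst, hts⟩ := simL_iff.1 hts
    obtain ⟨-, hus, hsu⟩ := simL_iff.1 hsu
    exact Or.inr (Or.inl (simL_iff.2 ⟨htu, hus.trans hq hn ha hrd hst (Ne.symm htu),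
      hts.trans hq hn ha hrd hsu htu⟩))
  · exact (hts.not_simR hq hn ha hld hsu).elim
  · exact Or.inr (Or.inr hts)
  · exact (hsu.symm.not_simR hq hn ha hld hts.symm).elim
  · obtain ⟨-, hst, hts⟩ := simR_iff.1 hts
    obtain ⟨-, hus, hsu⟩ := simR_iff.1 hsu
    exact Or.inr (Or.inr (simR_iff.2 ⟨htu, hus.trans hq hn ha hld hst (Ne.symm htu),
      hts.trans hq hn ha hld hsu htu⟩))

theorem sim_equivalence (hq : 1 ≤ q) (hn : 3 < n) (ha : OrdQInc q a)
    (hld : LeftDominant q a) (hrd : RightDominant q a) : Equivalence (Sim q a) where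
  refl _ := Or.inl rfl
  symm := by
    rintro _ _ (rfl | h | h)
    exacts [Or.inl rfl, Or.inr (Or.inl h.symm), Or.inr (Or.inr h.symm)]
  trans := Sim.trans hq hn ha hld hrd

theorem not_simR_of_simL_of_sim (hq : 1 ≤ q) (hn : 3 < n) (ha : OrdQInc q a)
    (hld : LeftDominant q a) {w : Fin d} (hts : SimL q a t s) (hsu : Sim q a s u) :
    ¬ SimR q a u w := by
  rcases hsu with rfl | hsu | hsu
  · exact hts.not_simR hq hn ha hld
  · exact hsu.not_simR hq hn ha hld
  · exact fun _ => hts.not_simR hq hn ha hld hsu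

theorem sim_class_simR_or_simL (hq : 1 ≤ q) (hn : 3 < n) (ha : OrdQInc q a)
    (hld : LeftDominant q a) (hrd : RightDominant q a) (t : Fin d) :
    (∀ s u, Sim q a t s → Sim q a t u → s ≠ u → SimR q a s u) ∨
    (∀ s u, Sim q a t s → Sim q a t u → s ≠ u → SimL q a s u) := by
  have hsim := sim_equivalence hq hn ha hld hrd
  by_cases hL : ∃ s u, Sim q a t s ∧ Sim q a t u ∧ SimL q a s u
  · obtain ⟨s₀, u₀, hs₀, hu₀, hL₀⟩ := hL
    refine Or.inr fun s u hs hu hsu => ?_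
    rcases hsim.trans (hsim.symm hs) hu with rfl | h | h
    · exact absurd rfl hsu
    · exact h
    · exact (not_simR_of_simL_of_sim hq hn ha hld hL₀ (hsim.trans (hsim.symm hu₀) hs) h).elim
  · refine Or.inl fun s u hs hu hsu => ?_
    rcases hsim.trans (hsim.symm hs) hu with rfl | h | h
    · exact absurd rfl hsu
    · exact absurd ⟨s, u, hs, hu, h⟩ hL
    · exact h

theorem Prec.trans (hq : 1 ≤ q) (hn : 3 < n) (ha : OrdQInc q a)
    (hld : LeftDominant q a) (hrd : RightDominant q a)
    (hts : Prec q a t s) (hsu : Prec q a s u) : Prec q a t u := by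
  obtain ⟨-, hRts, hLts⟩ := prec_iff.1 hts
  obtain ⟨-, hRsu, hLsu⟩ := prec_iff.1 hsu
  have htu : t ≠ u := by
    rintro rfl
    exact hLts.not_rightBelow hq (by omega) ha hRsu
  exact prec_iff.2 ⟨htu, hRts.trans hq hn ha hrd hRsu htu, hLts.trans hq hn ha hld hLsu htu⟩

theorem Prec.of_sim_left (hq : 1 ≤ q) (hn : 3 < n) (ha : OrdQInc q a)
    (hld : LeftDominant q a) (hrd : RightDominant q a) {t' : Fin d}
    (hts : Prec q a t s) (htt' : Sim q a t t') : Prec q a t' s := by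
  obtain ⟨-, hRts, hLts⟩ := prec_iff.1 hts
  rcases htt' with rfl | htt' | htt'
  · exact hts
  · obtain ⟨-, hRt't, -⟩ := simL_iff.1 htt'
    have ht's : t' ≠ s := by
      rintro rfl
      exact hLts.not_rightBelow hq (by omega) ha hRt't
    refine prec_iff.2 ⟨ht's, hRt't.trans hq hn ha hrd hRts ht's, ?_⟩
    exact (hld.leftBelow_or_rightBelow hq hn ha ht's).resolve_right
      fun hRst' => not_leftBelow_of_rightBelow_of_rightBelow hq hn ha hRst' hRt't hLts
  · obtain ⟨-, hLt't, -⟩ := simR_iff.1 htt'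
    have ht's : t' ≠ s := by
      rintro rfl
      exact hLt't.not_rightBelow hq (by omega) ha hRts
    refine prec_iff.2 ⟨ht's, ?_, hLt't.trans hq hn ha hld hLts ht's⟩
    exact (hrd.rightBelow_or_leftBelow hq hn ha ht's).resolve_right
      fun hLst' => not_rightBelow_of_leftBelow_of_leftBelow hq hn ha hLst' hLt't hRts

theorem Prec.of_sim_right (hq : 1 ≤ q) (hn : 3 < n) (ha : OrdQInc q a)
    (hld : LeftDominant q a) (hrd : RightDominant q a) {s' : Fin d}
    (hts : Prec q a t s) (hss' : Sim q a s s') : Prec q a t s' := by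
  obtain ⟨-, hRts, hLts⟩ := prec_iff.1 hts
  rcases hss' with rfl | hss' | hss'
  · exact hts
  · obtain ⟨-, -, hRss'⟩ := simL_iff.1 hss'
    have hts' : t ≠ s' := by
      rintro rfl
      exact hLts.not_rightBelow hq (by omega) ha hRss'
    refine prec_iff.2 ⟨hts', hRts.trans hq hn ha hrd hRss' hts', ?_⟩
    exact (hld.leftBelow_or_rightBelow hq hn ha hts').resolve_right
      fun hRs't => not_leftBelow_of_rightBelow_of_rightBelow hq hn ha hRss' hRs't hLts
  · obtain ⟨-, -, hLss'⟩ := simR_iff.1 hss'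
    have hts' : t ≠ s' := by
      rintro rfl
      exact hLss'.not_rightBelow hq (by omega) ha hRts
    refine prec_iff.2 ⟨hts', ?_, hLts.trans hq hn ha hld hLss' hts'⟩
    exact (hrd.rightBelow_or_leftBelow hq hn ha hts').resolve_right
      fun hLs't => not_rightBelow_of_leftBelow_of_leftBelow hq hn ha hLss' hLs't hRts

theorem prec_or_prec_of_not_sim (hq : 1 ≤ q) (hn : 3 < n) (ha : OrdQInc q a)
    (hld : LeftDominant q a) (hrd : RightDominant q a) (hts : ¬ Sim q a t s) :
    Prec q a t s ∨ Prec q a s t := by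
  have hne : t ≠ s := fun h => hts (Or.inl h)
  rcases hld.leftBelow_or_rightBelow hq hn ha hne with hL | hR' <;>
    rcases hrd.rightBelow_or_leftBelow hq hn ha hne with hR | hL'
  · exact Or.inl (prec_iff.2 ⟨hne, hR, hL⟩)
  · exact (hts (Or.inr (Or.inr (simR_iff.2 ⟨hne, hL', hL⟩)))).elim
  · exact (hts (Or.inr (Or.inl (simL_iff.2 ⟨hne, hR', hR⟩)))).elim
  · exact Or.inr (prec_iff.2 ⟨hne.symm, hR', hL'⟩)

end

/-- For a dominant ordered `q`-increasing sequence of length `n > 3`: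
(i) `∼` is an equivalence relation; (ii) in each equivalence class either all pairs
of distinct elements are right-similar or all are left-similar; (iii) `≺` is
transitive and induces a strict total order on the equivalence classes. -/
theorem sim_equivalence_prec_total_order (q : ℝ) (hq : 1 < q) (d n : ℕ) (hn : 3 < n)
    (a : Fin n → Fin (d + 1) → ℝ) (ha : OrdQInc q a)
    (hld : LeftDominant q a) (hrd : RightDominant q a) :
    Equivalence (Sim q a) ∧
    (∀ t : Fin d,
      (∀ s u, Sim q a t s → Sim q a t u → s ≠ u → SimR q a s u) ∨
      (∀ s u, Sim q a t s → Sim q a t u → s ≠ u → SimL q a s u)) ∧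
    (∀ t s u : Fin d, Prec q a t s → Prec q a s u → Prec q a t u) ∧
    (∀ t s : Fin d, ¬ Sim q a t s →
      ((∀ t' s', Sim q a t t' → Sim q a s s' → Prec q a t' s') ∨
       (∀ t' s', Sim q a t t' → Sim q a s s' → Prec q a s' t'))) := by
  have hq' := hq.le
  refine ⟨sim_equivalence hq' hn ha hld hrd, sim_class_simR_or_simL hq' hn ha hld hrd,
    fun _ _ _ => Prec.trans hq' hn ha hld hrd, fun t s hts => ?_⟩
  rcases prec_or_prec_of_not_sim hq' hn ha hld hrd hts with h | h
  · exact Or.inl fun t' s' htt' hss' =>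
      ((h.of_sim_left hq' hn ha hld hrd htt').of_sim_right hq' hn ha hld hrd hss')
  · exact Or.inr fun t' s' htt' hss' =>
      ((h.of_sim_left hq' hn ha hld hrd hss').of_sim_right hq' hn ha hld hrd htt')
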